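/- arXiv:1401.3225 — 6 statements merged into one kernel-verified Lean document; each statement's English description precedes it below -/
import Mathlib

section
/- There exist no functions c : Fin 3 × Fin 3 → ZMod 5 and p : Fin 3 × Fin 3 → ZMod 5 such that: (a) for every receiver index i, the six interference offsets {c i i + p j i, c i i + p k i, c i j + p j j, c i j + p k j, c i k + p j k, c i k + p k k} (where j, k are the other two indices) take at most 2 distinct values in ZMod 5; and (b) all separability conditions hold, namely at each receiver i the three dedicated offsets c i i + p i i, c i j + p i j, c i k + p i k are pairwise distinct, each is distinct from all six interference offsets at receiver i, and at each transmitter i the offsets p i i, p j i, p k i are pairwise distinct. -/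
set_option synthInstance.maxSize 2000
set_option synthInstance.maxHeartbeats 1000000
set_option maxHeartbeats 4000000

/-- The core finite infeasibility, over the six column-difference variables. -/
theorem cyclicIA_key : ∀ a0 a1 a2 b0 b1 b2 : ZMod 5,
    ¬ (a0 ≠ 0 ∧ b0 ≠ 0 ∧ a0 + b0 ≠ 0 ∧
    (b1 = b0 ∨ b1 = -b0) ∧ (b2 = b0 ∨ b2 = -b0) ∧
    (a1 + b1 = a0 + b0 ∨ a1 + b1 = -(a0 + b0)) ∧
    (a2 + b2 = a0 + b0 ∨ a2 + b2 = -(a0 + b0)) ∧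
    (a1 = a0 ∨ a1 = -a0) ∧ (a2 = a0 ∨ a2 = -a0) ∧
    (if b1 = b0 then a1 else a1 + b1) ≠ 0 ∧
    (if b1 = b0 then a1 else a1 + b1) ≠ -b0 ∧
    (if b2 = b0 then a2 else a2 + b2) ≠ 0 ∧
    (if b2 = b0 then a2 else a2 + b2) ≠ -b0 ∧
    a0 ≠ (if b1 = b0 then a1 else a1 + b1) ∧
    a0 ≠ (if b2 = b0 then a2 else a2 + b2) ∧
    (if b1 = b0 then a1 else a1 + b1) ≠ (if b2 = b0 then a2 else a2 + b2) ∧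
    (if a1 + b1 = a0 + b0 then -a1 else b1) ≠ 0 ∧
    (if a1 + b1 = a0 + b0 then -a1 else b1) ≠ -(a0 + b0) ∧
    (if a2 + b2 = a0 + b0 then -a2 else b2) ≠ 0 ∧
    (if a2 + b2 = a0 + b0 then -a2 else b2) ≠ -(a0 + b0) ∧
    -a0 ≠ (if a1 + b1 = a0 + b0 then -a1 else b1) ∧
    -a0 ≠ (if a2 + b2 = a0 + b0 then -a2 else b2) ∧
    (if a1 + b1 = a0 + b0 then -a1 else b1) ≠ (if a2 + b2 = a0 + b0 then -a2 else b2) ∧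
    (if a1 = a0 then -(a1 + b1) else -b1) ≠ 0 ∧
    (if a1 = a0 then -(a1 + b1) else -b1) ≠ -a0 ∧
    (if a2 = a0 then -(a2 + b2) else -b2) ≠ 0 ∧
    (if a2 = a0 then -(a2 + b2) else -b2) ≠ -a0 ∧
    -(a0 + b0) ≠ (if a1 = a0 then -(a1 + b1) else -b1) ∧
    -(a0 + b0) ≠ (if a2 = a0 then -(a2 + b2) else -b2) ∧
    (if a1 = a0 then -(a1 + b1) else -b1) ≠ (if a2 = a0 then -(a2 + b2) else -b2)) := by
  decide

lemma cyclicIA_negfact : ∀ x : ZMod 5, x = -x → x = 0 := by decide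

/-- From a 6-element collection of card ≤ 2 whose listed pairs are internally
distinct, the second and third pairs each coincide with the first pair. -/
lemma cyclicIA_pairs {s t u v x y : ZMod 5}
    (h : ({s, t, u, v, x, y} : Finset (ZMod 5)).card ≤ 2)
    (hst : s ≠ t) (huv : u ≠ v) (hxy : x ≠ y) :
    ((u = s ∧ v = t) ∨ (u = t ∧ v = s)) ∧ ((x = s ∧ y = t) ∨ (x = t ∧ y = s)) := by
  have hsub : ({s, t} : Finset (ZMod 5)) ⊆ {s, t, u, v, x, y} := by
    intro z hz
    simp only [Finset.mem_insert, Finset.mem_singleton] at hz ⊢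
    tauto
  have hcard : (({s, t, u, v, x, y} : Finset (ZMod 5))).card
      ≤ ({s, t} : Finset (ZMod 5)).card := by
    rw [Finset.card_pair hst]; exact h
  have heq : ({s, t, u, v, x, y} : Finset (ZMod 5)) = {s, t} :=
    (Finset.eq_of_subset_of_card_le hsub hcard).symm
  have mem2 : ∀ z : ZMod 5, z ∈ ({s, t, u, v, x, y} : Finset (ZMod 5)) →
      z = s ∨ z = t := by
    intro z hz; rw [heq] at hz; simpa using hz
  have hu := mem2 u (by simp)
  have hv := mem2 v (by simp)
  have hx := mem2 x (by simp)
  have hy := mem2 y (by simp)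
  constructor
  · rcases hu with h1 | h1 <;> rcases hv with h2 | h2
    · exact absurd (h1.trans h2.symm) huv
    · exact Or.inl ⟨h1, h2⟩
    · exact Or.inr ⟨h1, h2⟩
    · exact absurd (h1.trans h2.symm) huv
  · rcases hx with h1 | h1 <;> rcases hy with h2 | h2
    · exact absurd (h1.trans h2.symm) hxy
    · exact Or.inl ⟨h1, h2⟩
    · exact Or.inr ⟨h1, h2⟩
    · exact absurd (h1.trans h2.symm) hxy


/-- Variant anchored at the middle pair. -/
lemma cyclicIA_pairs' {s t u v x y : ZMod 5}
    (h : ({s, t, u, v, x, y} : Finset (ZMod 5)).card ≤ 2)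
    (huv : u ≠ v) (hst : s ≠ t) (hxy : x ≠ y) :
    ((s = u ∧ t = v) ∨ (s = v ∧ t = u)) ∧ ((x = u ∧ y = v) ∨ (x = v ∧ y = u)) := by
  have hsub : ({u, v} : Finset (ZMod 5)) ⊆ {s, t, u, v, x, y} := by
    intro z hz
    simp only [Finset.mem_insert, Finset.mem_singleton] at hz ⊢
    tauto
  have hcard : (({s, t, u, v, x, y} : Finset (ZMod 5))).card
      ≤ ({u, v} : Finset (ZMod 5)).card := by
    rw [Finset.card_pair huv]; exact h
  have heq : ({s, t, u, v, x, y} : Finset (ZMod 5)) = {u, v} :=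
    (Finset.eq_of_subset_of_card_le hsub hcard).symm
  have mem2 : ∀ z : ZMod 5, z ∈ ({s, t, u, v, x, y} : Finset (ZMod 5)) →
      z = u ∨ z = v := by
    intro z hz; rw [heq] at hz; simpa using hz
  have hs := mem2 s (by simp)
  have ht := mem2 t (by simp)
  have hx := mem2 x (by simp)
  have hy := mem2 y (by simp)
  constructor
  · rcases hs with h1 | h1 <;> rcases ht with h2 | h2
    · exact absurd (h1.trans h2.symm) hst
    · exact Or.inl ⟨h1, h2⟩
    · exact Or.inr ⟨h1, h2⟩
    · exact absurd (h1.trans h2.symm) hst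
  · rcases hx with h1 | h1 <;> rcases hy with h2 | h2
    · exact absurd (h1.trans h2.symm) hxy
    · exact Or.inl ⟨h1, h2⟩
    · exact Or.inr ⟨h1, h2⟩
    · exact absurd (h1.trans h2.symm) hxy

theorem perfect_cyclic_IA_infeasible :
    ¬ ∃ c p : Fin 3 × Fin 3 → ZMod 5,
      (∀ i j k : Fin 3, i ≠ j → j ≠ k → i ≠ k →
        ({c (i, i) + p (j, i), c (i, i) + p (k, i), c (i, j) + p (j, j),
          c (i, j) + p (k, j), c (i, k) + p (j, k), c (i, k) + p (k, k)} :
            Finset (ZMod 5)).card ≤ 2) ∧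
      (∀ i j k : Fin 3, i ≠ j → j ≠ k → i ≠ k →
        (c (i, i) + p (i, i) ≠ c (i, j) + p (i, j)) ∧
        (c (i, j) + p (i, j) ≠ c (i, k) + p (i, k)) ∧
        (∀ q ∈ ({c (i, i) + p (j, i), c (i, i) + p (k, i), c (i, j) + p (j, j),
            c (i, j) + p (k, j), c (i, k) + p (j, k), c (i, k) + p (k, k)} :
              Finset (ZMod 5)),
          c (i, i) + p (i, i) ≠ q ∧ c (i, j) + p (i, j) ≠ q ∧ c (i, k) + p (i, k) ≠ q) ∧
        p (i, i) ≠ p (j, i) ∧ p (j, i) ≠ p (k, i)) := by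
  rintro ⟨c, p, hA, hS⟩
  -- separability instances
  obtain ⟨hv00_01, hv01_02, hq0, hp00_10, hp10_20⟩ := hS 0 1 2 (by decide) (by decide) (by decide)
  obtain ⟨hv00_02, -, -, hp00_20, -⟩ := hS 0 2 1 (by decide) (by decide) (by decide)
  obtain ⟨hv11_10, hv10_12, hq1, hp11_01, hp01_21⟩ := hS 1 0 2 (by decide) (by decide) (by decide)
  obtain ⟨hv11_12, -, -, hp11_21, -⟩ := hS 1 2 0 (by decide) (by decide) (by decide)
  obtain ⟨hv22_20, hv20_21, hq2, hp22_02, hp02_12⟩ := hS 2 0 1 (by decide) (by decide) (by decide)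
  obtain ⟨hv22_21, -, -, hp22_12, -⟩ := hS 2 1 0 (by decide) (by decide) (by decide)
  -- dedicated-vs-interference instances
  obtain ⟨-, hv01X0, hv02X0⟩ := hq0 (c (0, 0) + p (1, 0)) (by simp)
  obtain ⟨-, hv01Y0, hv02Y0⟩ := hq0 (c (0, 0) + p (2, 0)) (by simp)
  obtain ⟨hv11X1, -, hv12X1⟩ := hq1 (c (1, 0) + p (0, 0)) (by simp)
  obtain ⟨hv11Y1, -, hv12Y1⟩ := hq1 (c (1, 0) + p (2, 0)) (by simp)
  obtain ⟨hv22X2, -, hv21X2⟩ := hq2 (c (2, 0) + p (0, 0)) (by simp)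
  obtain ⟨hv22Y2, -, hv21Y2⟩ := hq2 (c (2, 0) + p (1, 0)) (by simp)
  -- alignment instances
  have hA0 := hA 0 1 2 (by decide) (by decide) (by decide)
  have hA1 := hA 1 0 2 (by decide) (by decide) (by decide)
  have hA2 := hA 2 0 1 (by decide) (by decide) (by decide)
  obtain ⟨hc01, hc02⟩ := cyclicIA_pairs hA0
    (fun h => hp10_20 (add_left_cancel h))
    (fun h => hp11_21 (add_left_cancel h))
    (fun h => hp22_12.symm (add_left_cancel h))
  obtain ⟨hc11, hc12⟩ := cyclicIA_pairs' hA1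
    (fun h => hp00_20 (add_left_cancel h))
    (fun h => hp01_21 (add_left_cancel h))
    (fun h => hp22_02.symm (add_left_cancel h))
  obtain ⟨hc22, hc21⟩ := cyclicIA_pairs' hA2
    (fun h => hp00_10 (add_left_cancel h))
    (fun h => hp02_12 (add_left_cancel h))
    (fun h => hp11_01.symm (add_left_cancel h))
  -- nonzero differences
  have hb0 : p (1, 0) - p (2, 0) ≠ (0 : ZMod 5) := sub_ne_zero.mpr hp10_20
  have ha0 : p (0, 0) - p (1, 0) ≠ (0 : ZMod 5) := sub_ne_zero.mpr hp00_10
  have hs0 : p (0, 0) - p (2, 0) ≠ (0 : ZMod 5) := sub_ne_zero.mpr hp00_20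
  -- trivial column-0 dedicated expressions
  have e00 : c (0, 0) + p (0, 0)
      = c (0, 0) + p (1, 0) + (p (0, 0) - p (1, 0)) := by ring
  have e10 : c (1, 0) + p (1, 0)
      = c (1, 0) + p (0, 0) + (-(p (0, 0) - p (1, 0))) := by ring
  have e20 : c (2, 0) + p (2, 0)
      = c (2, 0) + p (0, 0) + (-(p (0, 0) - p (1, 0) + (p (1, 0) - p (2, 0)))) := by ring
  -- receiver-0 dedicated expressions for columns 1, 2
  have e01 : c (0, 1) + p (0, 1) = c (0, 0) + p (1, 0) +
      (if p (1, 1) - p (2, 1) = p (1, 0) - p (2, 0) then p (0, 1) - p (1, 1)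
       else p (0, 1) - p (1, 1) + (p (1, 1) - p (2, 1))) := by
    rcases hc01 with ⟨h1, h2⟩ | ⟨h1, h2⟩
    · rw [if_pos (by linear_combination h1 - h2)]; linear_combination h1
    · rw [if_neg fun h => hb0 (cyclicIA_negfact _ (by linear_combination h1 - h2 - h))]
      linear_combination h2
  have e02 : c (0, 2) + p (0, 2) = c (0, 0) + p (1, 0) +
      (if p (1, 2) - p (2, 2) = p (1, 0) - p (2, 0) then p (0, 2) - p (1, 2)
       else p (0, 2) - p (1, 2) + (p (1, 2) - p (2, 2))) := by
    rcases hc02 with ⟨h1, h2⟩ | ⟨h1, h2⟩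
    · rw [if_pos (by linear_combination h1 - h2)]; linear_combination h1
    · rw [if_neg fun h => hb0 (cyclicIA_negfact _ (by linear_combination h1 - h2 - h))]
      linear_combination h2
  -- receiver-1 dedicated expressions
  have e11 : c (1, 1) + p (1, 1) = c (1, 0) + p (0, 0) +
      (if p (0, 1) - p (1, 1) + (p (1, 1) - p (2, 1))
          = p (0, 0) - p (1, 0) + (p (1, 0) - p (2, 0)) then -(p (0, 1) - p (1, 1))
       else p (1, 1) - p (2, 1)) := by
    rcases hc11 with ⟨h1, h2⟩ | ⟨h1, h2⟩
    · rw [if_pos (by linear_combination h1 - h2)]; linear_combination h1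
    · rw [if_neg fun h => hs0 (cyclicIA_negfact _ (by linear_combination h1 - h2 - h))]
      linear_combination h2
  have e12 : c (1, 2) + p (1, 2) = c (1, 0) + p (0, 0) +
      (if p (0, 2) - p (1, 2) + (p (1, 2) - p (2, 2))
          = p (0, 0) - p (1, 0) + (p (1, 0) - p (2, 0)) then -(p (0, 2) - p (1, 2))
       else p (1, 2) - p (2, 2)) := by
    rcases hc12 with ⟨h1, h2⟩ | ⟨h1, h2⟩
    · rw [if_pos (by linear_combination h1 - h2)]; linear_combination h1
    · rw [if_neg fun h => hs0 (cyclicIA_negfact _ (by linear_combination h1 - h2 - h))]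
      linear_combination h2
  -- receiver-2 dedicated expressions
  have e21 : c (2, 1) + p (2, 1) = c (2, 0) + p (0, 0) +
      (if p (0, 1) - p (1, 1) = p (0, 0) - p (1, 0)
       then -(p (0, 1) - p (1, 1) + (p (1, 1) - p (2, 1)))
       else -(p (1, 1) - p (2, 1))) := by
    rcases hc21 with ⟨h1, h2⟩ | ⟨h1, h2⟩
    · rw [if_pos (by linear_combination h1 - h2)]; linear_combination h1
    · rw [if_neg fun h => ha0 (cyclicIA_negfact _ (by linear_combination h1 - h2 - h))]
      linear_combination h2
  have e22 : c (2, 2) + p (2, 2) = c (2, 0) + p (0, 0) +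
      (if p (0, 2) - p (1, 2) = p (0, 0) - p (1, 0)
       then -(p (0, 2) - p (1, 2) + (p (1, 2) - p (2, 2)))
       else -(p (1, 2) - p (2, 2))) := by
    rcases hc22 with ⟨h1, h2⟩ | ⟨h1, h2⟩
    · rw [if_pos (by linear_combination h1 - h2)]; linear_combination h1
    · rw [if_neg fun h => ha0 (cyclicIA_negfact _ (by linear_combination h1 - h2 - h))]
      linear_combination h2
  refine cyclicIA_key (p (0, 0) - p (1, 0)) (p (0, 1) - p (1, 1)) (p (0, 2) - p (1, 2))
    (p (1, 0) - p (2, 0)) (p (1, 1) - p (2, 1)) (p (1, 2) - p (2, 2))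
    ⟨ha0, hb0, ?_, ?_, ?_, ?_, ?_, ?_, ?_, ?_, ?_, ?_, ?_, ?_, ?_, ?_, ?_, ?_, ?_, ?_,
     ?_, ?_, ?_, ?_, ?_, ?_, ?_, ?_, ?_, ?_⟩
  -- a0 + b0 ≠ 0
  · intro h; exact hp00_20 (by linear_combination h)
  -- six disjunctions
  · rcases hc01 with ⟨h1, h2⟩ | ⟨h1, h2⟩
    · exact Or.inl (by linear_combination h1 - h2)
    · exact Or.inr (by linear_combination h1 - h2)
  · rcases hc02 with ⟨h1, h2⟩ | ⟨h1, h2⟩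
    · exact Or.inl (by linear_combination h1 - h2)
    · exact Or.inr (by linear_combination h1 - h2)
  · rcases hc11 with ⟨h1, h2⟩ | ⟨h1, h2⟩
    · exact Or.inl (by linear_combination h1 - h2)
    · exact Or.inr (by linear_combination h1 - h2)
  · rcases hc12 with ⟨h1, h2⟩ | ⟨h1, h2⟩
    · exact Or.inl (by linear_combination h1 - h2)
    · exact Or.inr (by linear_combination h1 - h2)
  · rcases hc21 with ⟨h1, h2⟩ | ⟨h1, h2⟩
    · exact Or.inl (by linear_combination h1 - h2)
    · exact Or.inr (by linear_combination h1 - h2)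
  · rcases hc22 with ⟨h1, h2⟩ | ⟨h1, h2⟩
    · exact Or.inl (by linear_combination h1 - h2)
    · exact Or.inr (by linear_combination h1 - h2)
  -- receiver 0 conditions
  · rw [e01] at hv01X0; exact fun h => hv01X0 (by rw [h]; ring)
  · rw [e01] at hv01Y0; exact fun h => hv01Y0 (by rw [h]; ring)
  · rw [e02] at hv02X0; exact fun h => hv02X0 (by rw [h]; ring)
  · rw [e02] at hv02Y0; exact fun h => hv02Y0 (by rw [h]; ring)
  · rw [e00, e01] at hv00_01; exact fun h => hv00_01 (by rw [h])
  · rw [e00, e02] at hv00_02; exact fun h => hv00_02 (by rw [h])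
  · rw [e01, e02] at hv01_02; exact fun h => hv01_02 (by rw [h])
  -- receiver 1 conditions
  · rw [e11] at hv11X1; exact fun h => hv11X1 (by rw [h]; ring)
  · rw [e11] at hv11Y1; exact fun h => hv11Y1 (by rw [h]; ring)
  · rw [e12] at hv12X1; exact fun h => hv12X1 (by rw [h]; ring)
  · rw [e12] at hv12Y1; exact fun h => hv12Y1 (by rw [h]; ring)
  · have h' := hv11_10.symm; rw [e10, e11] at h'; exact fun h => h' (by rw [h])
  · rw [e10, e12] at hv10_12; exact fun h => hv10_12 (by rw [h])
  · rw [e11, e12] at hv11_12; exact fun h => hv11_12 (by rw [h])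
  -- receiver 2 conditions
  · rw [e21] at hv21X2; exact fun h => hv21X2 (by rw [h]; ring)
  · rw [e21] at hv21Y2; exact fun h => hv21Y2 (by rw [h]; ring)
  · rw [e22] at hv22X2; exact fun h => hv22X2 (by rw [h]; ring)
  · rw [e22] at hv22Y2; exact fun h => hv22Y2 (by rw [h]; ring)
  · have h' := hv20_21; rw [e20, e21] at h'; exact fun h => h' (by rw [h])
  · have h' := hv22_20.symm; rw [e20, e22] at h'; exact fun h => h' (by rw [h])
  · have h' := hv22_21.symm; rw [e21, e22] at h'; exact fun h => h' (by rw [h])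
end

section
/- Suppose c, p : Fin 3 × Fin 3 → ZMod n with pairwise distinct indices i, j, k satisfy the alignment equations: c i i + p j i = c i j + p k j = c i k + p j k; c i i + p k i = c i j + p j j = c i k + p k k; c j i + p k i = c j j + p k j = c j k + p i k; c j i + p i i = c j k + p k k; c k i + p i i = c k j + p j j = c k k + p i k. Then c i j + c k i + c j k = c j i + c i k + c k j in ZMod n (constraint (i)). -/
theorem constraint_i_of_alignment_general (n : ℕ) (c p : Fin 3 × Fin 3 → ZMod n)
    (i j k : Fin 3)
    (h16b : c (i, j) + p (j, j) = c (i, k) + p (k, k))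
    (h18 : c (j, i) + p (i, i) = c (j, k) + p (k, k))
    (h20a : c (k, i) + p (i, i) = c (k, j) + p (j, j)) :
    c (i, j) + c (k, i) + c (j, k) = c (j, i) + c (i, k) + c (k, j) := by
  linear_combination h16b + h20a - h18

theorem constraint_i_of_alignment (n : ℕ) (c p : Fin 3 × Fin 3 → ZMod n)
    (i j k : Fin 3) (hij : i ≠ j) (hjk : j ≠ k) (hik : i ≠ k)
    (h15a : c (i, i) + p (j, i) = c (i, j) + p (k, j))
    (h15b : c (i, j) + p (k, j) = c (i, k) + p (j, k))
    (h16a : c (i, i) + p (k, i) = c (i, j) + p (j, j))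
    (h16b : c (i, j) + p (j, j) = c (i, k) + p (k, k))
    (h17a : c (j, i) + p (k, i) = c (j, j) + p (k, j))
    (h17b : c (j, j) + p (k, j) = c (j, k) + p (i, k))
    (h18 : c (j, i) + p (i, i) = c (j, k) + p (k, k))
    (h20a : c (k, i) + p (i, i) = c (k, j) + p (j, j))
    (h20b : c (k, j) + p (j, j) = c (k, k) + p (i, k)) :
    c (i, j) + c (k, i) + c (j, k) = c (j, i) + c (i, k) + c (k, j) :=
  constraint_i_of_alignment_general n c p i j k h16b h18 h20a
end

section
/- Suppose c, p : Fin 3 × Fin 3 → ZMod n with pairwise distinct indices i, j, k satisfy the full alignment scheme: c i i + p j i = c i j + p k j = c i k + p j k; c i i + p k i = c i j + p j j = c i k + p k k; c j i + p k i = c j j + p k j = c j k + p i k; c j i + p i i = c j k + p k k; c j j + p i j = c j k + p j k; c k i + p i i = c k j + p j j = c k k + p i k; c k j + p i j = c k i + p j i; c k i + p k i = c k k + p j k. Then c i i + c j k + c k j = c j j + c i k + c k i = c k k + c i j + c j i in ZMod n (constraint (ii)). -/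
theorem constraint_ii_of_alignment_general (n : ℕ) (c p : Fin 3 × Fin 3 → ZMod n)
    (i j k : Fin 3)
    (h15a : c (i, i) + p (j, i) = c (i, j) + p (k, j))
    (h15b : c (i, j) + p (k, j) = c (i, k) + p (j, k))
    (h16a : c (i, i) + p (k, i) = c (i, j) + p (j, j))
    (h17a : c (j, i) + p (k, i) = c (j, j) + p (k, j))
    (h17b : c (j, j) + p (k, j) = c (j, k) + p (i, k))
    (h19 : c (j, j) + p (i, j) = c (j, k) + p (j, k))
    (h20b : c (k, j) + p (j, j) = c (k, k) + p (i, k))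
    (h21 : c (k, j) + p (i, j) = c (k, i) + p (j, i)) :
    c (i, i) + c (j, k) + c (k, j) = c (j, j) + c (i, k) + c (k, i) ∧
    c (j, j) + c (i, k) + c (k, i) = c (k, k) + c (i, j) + c (j, i) := by
  constructor
  · linear_combination h15a + h15b - h19 + h21
  · linear_combination -h15a - h15b + h16a - h17a - h17b + h19 + h20b - h21

theorem constraint_ii_of_alignment (n : ℕ) (c p : Fin 3 × Fin 3 → ZMod n)
    (i j k : Fin 3) (hij : i ≠ j) (hjk : j ≠ k) (hik : i ≠ k)
    (h15a : c (i, i) + p (j, i) = c (i, j) + p (k, j))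
    (h15b : c (i, j) + p (k, j) = c (i, k) + p (j, k))
    (h16a : c (i, i) + p (k, i) = c (i, j) + p (j, j))
    (h16b : c (i, j) + p (j, j) = c (i, k) + p (k, k))
    (h17a : c (j, i) + p (k, i) = c (j, j) + p (k, j))
    (h17b : c (j, j) + p (k, j) = c (j, k) + p (i, k))
    (h18 : c (j, i) + p (i, i) = c (j, k) + p (k, k))
    (h19 : c (j, j) + p (i, j) = c (j, k) + p (j, k))
    (h20a : c (k, i) + p (i, i) = c (k, j) + p (j, j))
    (h20b : c (k, j) + p (j, j) = c (k, k) + p (i, k))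
    (h21 : c (k, j) + p (i, j) = c (k, i) + p (j, i))
    (h22 : c (k, i) + p (k, i) = c (k, k) + p (j, k)) :
    c (i, i) + c (j, k) + c (k, j) = c (j, j) + c (i, k) + c (k, i) ∧
    c (j, j) + c (i, k) + c (k, i) = c (k, k) + c (i, j) + c (j, i) :=
  constraint_ii_of_alignment_general n c p i j k h15a h15b h16a h17a h17b h19 h20b h21
end

section
/- Let c : Fin 3 × Fin 3 → ZMod n satisfy, for some distinct i, j, k, constraints (i) c i j + c k i + c j k = c j i + c i k + c k j and (ii) c i i + c j k + c k j = c j j + c i k + c k i = c k k + c i j + c j i. Then for every choice of q ∈ ZMod n there exists a unique p : Fin 3 × Fin 3 → ZMod n with p k i = q satisfying all scheme equations: c i i + p j i = c i j + p k j = c i k + p j k; c i i + p k i = c i j + p j j = c i k + p k k; c j i + p k i = c j j + p k j = c j k + p i k; c j i + p i i = c j k + p k k; c j j + p i j = c j k + p j k; c k i + p i i = c k j + p j j = c k k + p i k; c k j + p i j = c k i + p j i; c k i + p k i = c k k + p j k. -/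
/-!
Once `p (k, i) = q` is fixed, the scheme equations can be solved one after another, each
determining a new offset, so the nine offsets are forced. Eight of the twelve equations are used
up this way; the compatibility constraints (i) and (ii) are exactly what make the remaining four
hold for the forced values. A permutation of `Fin 3` reduces everything to `i, j, k = 0, 1, 2`.
-/

section

variable {G : Type*} [AddCommGroup G]

def SchemeEquations (c p : Fin 3 × Fin 3 → G) (i j k : Fin 3) : Prop :=
  c (i, i) + p (j, i) = c (i, j) + p (k, j) ∧
  c (i, j) + p (k, j) = c (i, k) + p (j, k) ∧
  c (i, i) + p (k, i) = c (i, j) + p (j, j) ∧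
  c (i, j) + p (j, j) = c (i, k) + p (k, k) ∧
  c (j, i) + p (k, i) = c (j, j) + p (k, j) ∧
  c (j, j) + p (k, j) = c (j, k) + p (i, k) ∧
  c (j, i) + p (i, i) = c (j, k) + p (k, k) ∧
  c (j, j) + p (i, j) = c (j, k) + p (j, k) ∧
  c (k, i) + p (i, i) = c (k, j) + p (j, j) ∧
  c (k, j) + p (j, j) = c (k, k) + p (i, k) ∧
  c (k, j) + p (i, j) = c (k, i) + p (j, i) ∧
  c (k, i) + p (k, i) = c (k, k) + p (j, k)

def schemeSolution (c : Fin 3 × Fin 3 → G) (q : G) : Fin 3 × Fin 3 → G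
  | (0, 0) => c (1, 2) + c (0, 0) + q - c (0, 2) - c (1, 0)
  | (0, 1) => c (1, 2) + c (2, 0) + q - c (2, 2) - c (1, 1)
  | (0, 2) => c (1, 0) + q - c (1, 2)
  | (1, 0) => c (0, 1) + c (1, 0) + q - c (1, 1) - c (0, 0)
  | (1, 1) => c (0, 0) + q - c (0, 1)
  | (1, 2) => c (2, 0) + q - c (2, 2)
  | (2, 0) => q
  | (2, 1) => c (1, 0) + q - c (1, 1)
  | (2, 2) => c (0, 0) + q - c (0, 2)

theorem schemeEquations_schemeSolution (c : Fin 3 × Fin 3 → G) (q : G)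
    (hi : c (0, 1) + c (2, 0) + c (1, 2) = c (1, 0) + c (0, 2) + c (2, 1))
    (hii1 : c (0, 0) + c (1, 2) + c (2, 1) = c (1, 1) + c (0, 2) + c (2, 0))
    (hii2 : c (1, 1) + c (0, 2) + c (2, 0) = c (2, 2) + c (0, 1) + c (1, 0)) :
    SchemeEquations c (schemeSolution c q) 0 1 2 := by
  simp only [SchemeEquations, schemeSolution]
  refine ⟨by abel, ?_, by abel, by abel, by abel, by abel, by abel, by abel, ?_, ?_, ?_, by abel⟩
  · linear_combination (norm := abel) -hii2
  · linear_combination (norm := abel) hi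
  · linear_combination (norm := abel) hii1 + hii2
  · linear_combination (norm := abel) hii1 + hii2

theorem eq_schemeSolution_of_schemeEquations {c p : Fin 3 × Fin 3 → G} {q : G}
    (hq : p (2, 0) = q) (hp : SchemeEquations c p 0 1 2) : p = schemeSolution c q := by
  obtain ⟨h2, -, h4, h5, h6, h7, h8, h9, -, -, -, h13⟩ := hp
  have e11 : p (1, 1) = c (0, 0) + q - c (0, 1) := by linear_combination (norm := abel) hq - h4
  have e22 : p (2, 2) = c (0, 0) + q - c (0, 2) := by linear_combination (norm := abel) e11 - h5
  have e21 : p (2, 1) = c (1, 0) + q - c (1, 1) := by linear_combination (norm := abel) hq - h6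
  have e02 : p (0, 2) = c (1, 0) + q - c (1, 2) := by linear_combination (norm := abel) e21 - h7
  have e12 : p (1, 2) = c (2, 0) + q - c (2, 2) := by linear_combination (norm := abel) hq - h13
  have e00 : p (0, 0) = c (1, 2) + c (0, 0) + q - c (0, 2) - c (1, 0) := by
    linear_combination (norm := abel) e22 + h8
  have e01 : p (0, 1) = c (1, 2) + c (2, 0) + q - c (2, 2) - c (1, 1) := by
    linear_combination (norm := abel) e12 + h9
  have e10 : p (1, 0) = c (0, 1) + c (1, 0) + q - c (1, 1) - c (0, 0) := by
    linear_combination (norm := abel) e21 + h2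
  funext ⟨a, b⟩
  fin_cases a <;> fin_cases b <;> assumption

end

theorem existsUnique_comp_equiv {α β γ : Type*} (e : α ≃ β) {P : (α → γ) → Prop}
    (h : ∃! f, P f) : ∃! g : β → γ, P (g ∘ e) :=
  (e.arrowCongr (Equiv.refl γ)).existsUnique_congr_left.mp h

theorem exists_perm_fin_three {i j k : Fin 3} (hij : i ≠ j) (hjk : j ≠ k) (hik : i ≠ k) :
    ∃ σ : Equiv.Perm (Fin 3), σ 0 = i ∧ σ 1 = j ∧ σ 2 = k := by
  revert i j k
  decide

theorem scheme_parameters_unique (n : ℕ) (c : Fin 3 × Fin 3 → ZMod n)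
    (i j k : Fin 3) (hij : i ≠ j) (hjk : j ≠ k) (hik : i ≠ k)
    (hi : c (i, j) + c (k, i) + c (j, k) = c (j, i) + c (i, k) + c (k, j))
    (hii1 : c (i, i) + c (j, k) + c (k, j) = c (j, j) + c (i, k) + c (k, i))
    (hii2 : c (j, j) + c (i, k) + c (k, i) = c (k, k) + c (i, j) + c (j, i))
    (q : ZMod n) :
    ∃! p : Fin 3 × Fin 3 → ZMod n,
      p (k, i) = q ∧
      c (i, i) + p (j, i) = c (i, j) + p (k, j) ∧
      c (i, j) + p (k, j) = c (i, k) + p (j, k) ∧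
      c (i, i) + p (k, i) = c (i, j) + p (j, j) ∧
      c (i, j) + p (j, j) = c (i, k) + p (k, k) ∧
      c (j, i) + p (k, i) = c (j, j) + p (k, j) ∧
      c (j, j) + p (k, j) = c (j, k) + p (i, k) ∧
      c (j, i) + p (i, i) = c (j, k) + p (k, k) ∧
      c (j, j) + p (i, j) = c (j, k) + p (j, k) ∧
      c (k, i) + p (i, i) = c (k, j) + p (j, j) ∧
      c (k, j) + p (j, j) = c (k, k) + p (i, k) ∧
      c (k, j) + p (i, j) = c (k, i) + p (j, i) ∧
      c (k, i) + p (k, i) = c (k, k) + p (j, k) := by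
  obtain ⟨σ, rfl, rfl, rfl⟩ := exists_perm_fin_three hij hjk hik
  let m := Equiv.prodCongr σ σ
  -- the equations for `c, p` at `σ 0, σ 1, σ 2` are, definitionally, those for `c ∘ m, p ∘ m`
  -- at `0, 1, 2`
  have hstd : ∃! p', p' (2, 0) = q ∧ SchemeEquations (c ∘ m) p' 0 1 2 :=
    ⟨schemeSolution (c ∘ m) q,
      ⟨rfl, schemeEquations_schemeSolution (c ∘ m) q hi hii1 hii2⟩,
      fun _ ⟨hq, hp⟩ => eq_schemeSolution_of_schemeEquations hq hp⟩
  exact existsUnique_comp_equiv m hstd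
end

section
/- Suppose c, p : Fin 3 × Fin 3 → ZMod n with pairwise distinct i, j, k satisfy c j j + p i j = c j k + p j k (alignment (19)), c k i + p k i = c k k + p j k (alignment (22)), and c i i + p k i = c i k + p k k (part of (16)), together with the separability requirement c i j + p i j ≠ c i k + p k k (inter-user condition (12)). Then c i i + c j j + c k k ≠ c i j + c j k + c k i in ZMod n. -/
theorem constraint_ix_from_cond12_general (n : ℕ) (c p : Fin 3 × Fin 3 → ZMod n)
    (i j k : Fin 3)
    (h19 : c (j, j) + p (i, j) = c (j, k) + p (j, k))
    (h22 : c (k, i) + p (k, i) = c (k, k) + p (j, k))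
    (h16 : c (i, i) + p (k, i) = c (i, k) + p (k, k))
    (hsep : c (i, j) + p (i, j) ≠ c (i, k) + p (k, k)) :
    c (i, i) + c (j, j) + c (k, k) ≠ c (i, j) + c (j, k) + c (k, i) := by
  intro h
  apply hsep
  linear_combination h19 - h22 + h16 - h

theorem constraint_ix_from_cond12 (n : ℕ) (c p : Fin 3 × Fin 3 → ZMod n)
    (i j k : Fin 3) (hij : i ≠ j) (hjk : j ≠ k) (hik : i ≠ k)
    (h19 : c (j, j) + p (i, j) = c (j, k) + p (j, k))
    (h22 : c (k, i) + p (k, i) = c (k, k) + p (j, k))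
    (h16 : c (i, i) + p (k, i) = c (i, k) + p (k, k))
    (hsep : c (i, j) + p (i, j) ≠ c (i, k) + p (k, k)) :
    c (i, i) + c (j, j) + c (k, k) ≠ c (i, j) + c (j, k) + c (k, i) :=
  constraint_ix_from_cond12_general n c p i j k h19 h22 h16 hsep
end

section
/- Suppose c, p : Fin 3 × Fin 3 → ZMod n with pairwise distinct i, j, k satisfy c j j + p i j = c j k + p j k, c k i + p k i = c k k + p j k, c i i + p k i = c i j + p j j (parts of alignments (19), (22), (16)), together with the separability requirement p j j ≠ p i j. Then c i i + c j j + c k k ≠ c i j + c j k + c k i in ZMod n. -/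
theorem cyclic_sum_sub_diag_sum_eq {ι G : Type*} [AddCommGroup G] (c p : ι × ι → G) (i j k : ι)
    (h19 : c (j, j) + p (i, j) = c (j, k) + p (j, k))
    (h22 : c (k, i) + p (k, i) = c (k, k) + p (j, k))
    (h16 : c (i, i) + p (k, i) = c (i, j) + p (j, j)) :
    c (i, j) + c (j, k) + c (k, i) - (c (i, i) + c (j, j) + c (k, k)) = p (i, j) - p (j, j) := by
  linear_combination (norm := abel) h22 - h16 - h19

theorem constraint_ix_from_intra_dagger_general (n : ℕ) (c p : Fin 3 × Fin 3 → ZMod n)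
    (i j k : Fin 3)
    (h19 : c (j, j) + p (i, j) = c (j, k) + p (j, k))
    (h22 : c (k, i) + p (k, i) = c (k, k) + p (j, k))
    (h16 : c (i, i) + p (k, i) = c (i, j) + p (j, j))
    (hsep : p (j, j) ≠ p (i, j)) :
    c (i, i) + c (j, j) + c (k, k) ≠ c (i, j) + c (j, k) + c (k, i) := by
  have hexcess := cyclic_sum_sub_diag_sum_eq c p i j k h19 h22 h16
  rw [ne_comm, ← sub_ne_zero, hexcess, sub_ne_zero]
  exact hsep.symm

theorem constraint_ix_from_intra_dagger (n : ℕ) (c p : Fin 3 × Fin 3 → ZMod n)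
    (i j k : Fin 3) (hij : i ≠ j) (hjk : j ≠ k) (hik : i ≠ k)
    (h19 : c (j, j) + p (i, j) = c (j, k) + p (j, k))
    (h22 : c (k, i) + p (k, i) = c (k, k) + p (j, k))
    (h16 : c (i, i) + p (k, i) = c (i, j) + p (j, j))
    (hsep : p (j, j) ≠ p (i, j)) :
    c (i, i) + c (j, j) + c (k, k) ≠ c (i, j) + c (j, k) + c (k, i) :=
  constraint_ix_from_intra_dagger_general n c p i j k h19 h22 h16 hsep
end
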